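/- Consider the explicit Euler step w^{n+1} = (1 - τ/c)·w^n + τ·(r + u₊/(k₁ c)) - τ·h·ψ(w^n)/c, where c > 0, σ > 0, k₁ > 0, r ≥ 0, u ∈ ℝ, h ≥ 0, and ψ(w) = min{1, max{w/σ, 0}}. If w^n ≥ 0 and τ ≤ min{ c, σ/(σ/c - r + h/c), c/(1 + h/σ) } (where a term is omitted from the minimum whenever its denominator is nonpositive, i.e., the constraint is vacuous in that case), then w^{n+1} ≥ 0. -/
import Mathlib


/-- The explicit Euler step for the surface water ODE preserves nonnegativity under
the time step restriction (3.11). -/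
theorem stmt5 (c σ k₁ r u h τ wn : ℝ)
    (hc : 0 < c) (hσ : 0 < σ) (hk₁ : 0 < k₁) (hr : 0 ≤ r) (hh : 0 ≤ h)
    (hτpos : 0 ≤ τ)
    (hwn : 0 ≤ wn)
    (hτ1 : τ ≤ c)
    (hτ2 : 0 < σ / c - r + h / c → τ ≤ σ / (σ / c - r + h / c))
    (hτ3 : 0 < 1 + h / σ → τ ≤ c / (1 + h / σ))
    (ψ : ℝ → ℝ) (hψ : ∀ w, ψ w = min 1 (max (w / σ) 0)) :
    0 ≤ (1 - τ / c) * wn + τ * (r + max u 0 / (k₁ * c)) - τ * (h * ψ wn / c) := by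
  have hM : 0 ≤ max u 0 / (k₁ * c) := by positivity
  set N := max u 0 / (k₁ * c) with hN
  rw [hψ wn, max_eq_left (div_nonneg hwn hσ.le)]
  rcases le_total wn σ with hle | hge
  · rw [min_eq_right ((div_le_one hσ).2 hle)]
    have hden : 0 < 1 + h / σ := by positivity
    have key : τ * (1 + h / σ) ≤ c := (le_div_iff₀ hden).mp (hτ3 hden)
    have key2 : τ * (σ + h) ≤ σ * c := by
      have h1 := mul_le_mul_of_nonneg_left key hσ.le
      have h2 : σ * (τ * (1 + h / σ)) = τ * (σ + h) := by field_simp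
      linarith [h2 ▸ h1]
    have hE : (1 - τ / c) * wn + τ * (r + N) - τ * (h * (wn / σ) / c)
        = ((c - τ) * σ * wn + σ * c * τ * r + σ * c * τ * N - τ * h * wn) / (σ * c) := by
      field_simp; ring
    rw [hE]
    apply div_nonneg _ (by positivity)
    nlinarith [mul_nonneg hwn (by linarith : (0:ℝ) ≤ σ * c - τ * σ - τ * h),
      mul_nonneg (mul_nonneg (mul_nonneg hσ.le hc.le) hτpos) hr,
      mul_nonneg (mul_nonneg (mul_nonneg hσ.le hc.le) hτpos) hM]
  · rw [min_eq_left ((one_le_div hσ).2 hge)]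
    have hE : (1 - τ / c) * wn + τ * (r + N) - τ * (h * 1 / c)
        = ((c - τ) * wn + c * τ * r + c * τ * N - τ * h) / c := by
      field_simp; ring
    rw [hE]
    apply div_nonneg _ hc.le
    have hcD : c * (σ / c - r + h / c) = σ - c * r + h := by field_simp
    have hint1 : 0 ≤ (c - τ) * (wn - σ) :=
      mul_nonneg (by linarith) (by linarith)
    have hint2 : 0 ≤ c * τ * N := mul_nonneg (mul_nonneg hc.le hτpos) hM
    rcases le_or_gt (σ / c - r + h / c) 0 with hD | hD
    · have hD' : σ - c * r + h ≤ 0 := by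
        nlinarith [mul_nonpos_of_nonneg_of_nonpos hc.le hD]
      nlinarith [mul_nonneg hτpos (by linarith : (0:ℝ) ≤ -(σ - c * r + h)),
        mul_pos hc hσ]
    · have key := (le_div_iff₀ hD).mp (hτ2 hD)
      have key3 : τ * (σ - c * r + h) ≤ σ * c := by
        have h1 := mul_le_mul_of_nonneg_left key hc.le
        nlinarith [hcD]
      nlinarith
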